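/- arXiv:2310.09227 — 3 statements merged into one kernel-verified Lean document; each statement's English description precedes it below -/
import Mathlib

section
/- Let n, k be natural numbers with n ≥ 2k − 1. Then the number of standard k-element subsets of {1,…,n} equals C(n,k) − C(n,k−1). -/
open scoped Classical

/-- Integer binomial coefficient with the convention `C x y = 0` unless `0 ≤ y ≤ x`. -/
noncomputable def C (x y : ℤ) : ℤ :=
  if 0 ≤ y ∧ y ≤ x then (x.toNat).choose y.toNat else 0

/-- A finset `β = {b₁ < b₂ < … < b_m}` of naturals is *standard* if `bᵢ ≥ 2i` for all `i`. -/
def IsStandard (β : Finset ℕ) : Prop :=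
  ∀ i < β.card, 2 * (i + 1) ≤ (β.sort (· ≤ ·)).getD i 0

/-- The standard `k`-element subsets of `{1,…,n}`. -/
noncomputable def stdSets (n k : ℕ) : Finset (Finset ℕ) :=
  (Finset.Icc 1 n).powerset.filter fun β => IsStandard β ∧ β.card = k

/-!
A set `β` is standard iff every `b ∈ β` satisfies `2 · #{x ∈ β | x ≤ b} ≤ b`, since `b` is the
`#{x ∈ β | x ≤ b}`-th smallest element of `β`. In this form, putting `a` on top of a standard set
`γ` of smaller elements keeps it standard exactly when `2 (#γ + 1) ≤ a`. Hence, splitting the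
standard `k`-subsets of `{1,…,m+1}` according to whether they contain `m + 1` gives Pascal's
recursion as long as `2k ≤ m + 1`, which `C(n,k) − C(n,k−1)` satisfies as well. On the boundary
`n = 2k − 1` there are no standard `k`-sets, and `C(2k−1,k) = C(2k−1,k−1)`.
-/

open Finset

theorem Finset.card_filter_le_orderEmbOfFin {α : Type*} [LinearOrder α] (s : Finset α) {k : ℕ}
    (h : s.card = k) (i : Fin k) : #{x ∈ s | x ≤ s.orderEmbOfFin h i} = i + 1 := by
  set f := s.orderEmbOfFin h
  calc #{x ∈ s | x ≤ f i} = #{x ∈ univ.map f.toEmbedding | x ≤ f i} :=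
        congrArg (fun t => #{x ∈ t | x ≤ f i}) (map_orderEmbOfFin_univ s h).symm
    _ = #{j | j ≤ i} := by simp [filter_map, f.le_iff_le]
    _ = i + 1 := by rw [filter_ge_eq_Iic, Fin.card_Iic]

theorem isStandard_iff_orderEmbOfFin (β : Finset ℕ) :
    IsStandard β ↔ ∀ i : Fin #β, 2 * (i + 1 : ℕ) ≤ β.orderEmbOfFin rfl i := by
  simp only [IsStandard, orderEmbOfFin_apply, Fin.forall_iff]
  refine forall₂_congr fun i hi => ?_
  rw [List.getD_eq_getElem _ _ (by simpa using hi)]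
  rfl

theorem isStandard_iff_card_filter_le (β : Finset ℕ) :
    IsStandard β ↔ ∀ b ∈ β, 2 * #{x ∈ β | x ≤ b} ≤ b := by
  rw [isStandard_iff_orderEmbOfFin]
  constructor
  · intro H b hb
    obtain ⟨i, rfl⟩ : b ∈ Set.range (β.orderEmbOfFin rfl) := by simpa using hb
    simpa [card_filter_le_orderEmbOfFin] using H i
  · intro H i
    simpa [card_filter_le_orderEmbOfFin] using H _ (orderEmbOfFin_mem β rfl i)

theorem isStandard_insert_iff {a : ℕ} {γ : Finset ℕ} (h : ∀ x ∈ γ, x < a) :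
    IsStandard (insert a γ) ↔ IsStandard γ ∧ 2 * (#γ + 1) ≤ a := by
  have ha : a ∉ γ := fun ha => (h a ha).false
  have hbelow (b) (hb : b ∈ γ) : {x ∈ insert a γ | x ≤ b} = {x ∈ γ | x ≤ b} := by
    rw [filter_insert, if_neg (h b hb).not_ge]
  have htop : {x ∈ insert a γ | x ≤ a} = insert a γ :=
    filter_true_of_mem fun x hx => (mem_insert.1 hx).elim le_of_eq fun hx => (h x hx).le
  rw [isStandard_iff_card_filter_le, isStandard_iff_card_filter_le, forall_mem_insert, htop,
    card_insert_of_notMem ha, and_comm]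
  exact and_congr_left' (forall₂_congr fun b hb => by rw [hbelow b hb])

theorem stdSets_zero (n : ℕ) : stdSets n 0 = {∅} := by
  ext β
  simp only [stdSets, mem_filter, mem_powerset, card_eq_zero, mem_singleton]
  constructor
  · exact fun h => h.2.2
  · rintro rfl
    exact ⟨empty_subset _, fun i hi => absurd hi (Nat.not_lt_zero i), rfl⟩

theorem stdSets_eq_empty_of_lt {n k : ℕ} (hk : 0 < k) (hn : n < 2 * k) : stdSets n k = ∅ := by
  refine filter_eq_empty_iff.2 fun β hβ ⟨hstd, hcard⟩ => ?_
  have hne : β.Nonempty := card_pos.1 (hcard ▸ hk)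
  have hmax := (isStandard_iff_card_filter_le β).1 hstd _ (β.max'_mem hne)
  rw [filter_true_of_mem fun x => β.le_max' x, hcard] at hmax
  have := (mem_Icc.1 (mem_powerset.1 hβ (β.max'_mem hne))).2
  omega

theorem card_stdSets_succ_succ {m j : ℕ} (h : 2 * (j + 1) ≤ m + 1) :
    #(stdSets (m + 1) (j + 1)) = #(stdSets m (j + 1)) + #(stdSets m j) := by
  simp only [stdSets, card_filter]
  rw [← insert_Icc_right_eq_Icc_add_one (by omega), sum_powerset_insert (by simp)]
  refine congrArg _ (sum_congr rfl fun γ hγ => if_congr ?_ rfl rfl)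
  have hlt (x) (hx : x ∈ γ) : x < m + 1 := Nat.lt_succ_of_le (mem_Icc.1 (mem_powerset.1 hγ hx)).2
  rw [isStandard_insert_iff hlt, card_insert_of_notMem fun hm => (hlt _ hm).false]
  constructor
  · rintro ⟨⟨hs, -⟩, hc⟩
    exact ⟨hs, by omega⟩
  · rintro ⟨hs, rfl⟩
    exact ⟨⟨hs, h⟩, rfl⟩

theorem C_natCast (n k : ℕ) : C n k = n.choose k := by
  unfold C
  split_ifs with h
  · simp
  · rw [Nat.choose_eq_zero_of_lt (by omega), Nat.cast_zero]

theorem C_zero_right {x : ℤ} (hx : 0 ≤ x) : C x 0 = 1 := by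
  simp [C, hx]

theorem C_of_neg (x : ℤ) {y : ℤ} (hy : y < 0) : C x y = 0 :=
  if_neg fun h => hy.not_ge h.1

theorem C_natCast_add_one (m : ℕ) (y : ℤ) : C (m + 1) y = C m y + C m (y - 1) := by
  rcases lt_or_ge y 0 with hy | hy
  · simp [C_of_neg, hy, hy.trans (by norm_num : (0 : ℤ) < 1)]
  lift y to ℕ using hy
  cases y with
  | zero =>
    rw [C_of_neg _ (by norm_num : ((0 : ℕ) - 1 : ℤ) < 0), ← Nat.cast_succ, C_natCast, C_natCast]
    simp
  | succ j =>
    rw [← Nat.cast_succ m, C_natCast, C_natCast, Nat.cast_succ j, add_sub_cancel_right, C_natCast,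
      Nat.choose_succ_succ', Nat.cast_add, add_comm]

theorem statement0 (n k : ℕ) (h : (n : ℤ) ≥ 2 * k - 1) :
    ((stdSets n k).card : ℤ) = C n k - C n ((k : ℤ) - 1) := by
  have hzero (n : ℕ) : ((stdSets n 0).card : ℤ) = C n (0 : ℕ) - C n ((0 : ℕ) - 1) := by
    simp [stdSets_zero, C_zero_right, C_of_neg]
  induction n generalizing k with
  | zero =>
    obtain rfl : k = 0 := by omega
    exact hzero 0
  | succ m ih =>
    cases k with
    | zero => exact hzero (m + 1)
    | succ j =>
      rcases (by omega : m = 2 * j ∨ 2 * (j + 1) ≤ m + 1) with rfl | hm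
      · rw [stdSets_eq_empty_of_lt j.succ_pos (by omega), C_natCast, Nat.cast_succ j,
          add_sub_cancel_right, C_natCast, Nat.choose_symm_half, card_empty, Nat.cast_zero,
          sub_self]
      · rw [card_stdSets_succ_succ hm, Nat.cast_add, ih (j + 1) (by omega), ih j (by omega)]
        push_cast
        simp only [C_natCast_add_one, add_sub_cancel_right]
        ring
end

section
/- Let n, k be natural numbers with n ≥ 2k − 1. Then the number of standard subsets of {1,…,n} of size at most k equals C(n,k). (In particular the Bier matrix P_k is square.) -/
/-!
Write `s(n, k)` for the number of standard subsets of `{1,…,n}` of size at most `k`. Splitting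
the sets by whether they contain `n + 1` gives Pascal's rule `s(n+1, k+1) = s(n, k+1) + s(n, k)`
whenever `2(k+1) ≤ n+1`: adjoining a new maximum `n + 1` to a standard set of size at most `k`
keeps it standard. On the boundary `n = 2k + 1`, a standard set of size `k + 1` would have its
largest element at least `2k + 2`, so `s(2k+1, k+1) = s(2k+1, k)`, matching
`C(2k+1, k+1) = C(2k+1, k)`.
-/

open scoped Classical

/-- The standard subsets of `{1,…,n}` of size at most `k`. -/
noncomputable def stdLe (n k : ℕ) : Finset (Finset ℕ) :=
  (Finset.Icc 1 n).powerset.filter fun β => IsStandard β ∧ β.card ≤ k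

namespace Finset

theorem sort_insert_of_forall_lt {α : Type*} [LinearOrder α] {s : Finset α} {a : α}
    (h : ∀ b ∈ s, b < a) : (insert a s).sort (· ≤ ·) = s.sort (· ≤ ·) ++ [a] := by
  have ha : a ∉ s := fun ha => (h a ha).false
  have hnodup : (s.sort (· ≤ ·) ++ [a]).Nodup :=
    List.nodup_append.2 ⟨sort_nodup _ _, List.nodup_singleton a, by simpa using ha⟩
  have htoFinset : (s.sort (· ≤ ·) ++ [a]).toFinset = insert a s := by
    ext; simp
  rw [← htoFinset, List.toFinset_sort _ hnodup]
  refine List.pairwise_append.2 ⟨pairwise_sort _ _, List.pairwise_singleton _ a, ?_⟩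
  simp only [mem_sort, List.mem_singleton]
  rintro b hb _ rfl
  exact (h b hb).le

theorem card_filter_powerset_insert {α : Type*} [DecidableEq α] {s : Finset α} {a : α}
    (ha : a ∉ s) (p : Finset α → Prop) [DecidablePred p] :
    ((insert a s).powerset.filter p).card =
      (s.powerset.filter p).card + (s.powerset.filter fun t => p (insert a t)).card := by
  have hdisj : Disjoint (s.powerset.filter p) ((s.powerset.image (insert a)).filter p) := by
    refine disjoint_filter_filter (disjoint_left.2 ?_)
    rintro t ht ht'
    obtain ⟨u, -, rfl⟩ := mem_image.1 ht'
    exact notMem_of_mem_powerset_of_notMem ht ha (mem_insert_self a u)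
  have hinj :
      Set.InjOn (insert a) (↑(s.powerset.filter fun t => p (insert a t)) : Set (Finset α)) :=
    fun t ht u hu htu => by
      have hat := notMem_of_mem_powerset_of_notMem (mem_filter.1 ht).1 ha
      have hau := notMem_of_mem_powerset_of_notMem (mem_filter.1 hu).1 ha
      rw [← erase_insert hat, ← erase_insert hau, htu]
  rw [powerset_insert, filter_union, card_union_of_disjoint hdisj, filter_image,
    card_image_of_injOn hinj]

end Finset

open Finset

lemma mem_stdLe {n k : ℕ} {β : Finset ℕ} :
    β ∈ stdLe n k ↔ β ⊆ Icc 1 n ∧ IsStandard β ∧ β.card ≤ k := by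
  simp [stdLe]

lemma isStandard_insert_of_forall_lt {β : Finset ℕ} {a : ℕ} (h : ∀ b ∈ β, b < a) :
    IsStandard (insert a β) ↔ IsStandard β ∧ 2 * (β.card + 1) ≤ a := by
  have hcard : (insert a β).card = β.card + 1 := card_insert_of_notMem fun ha => (h a ha).false
  have hlen : (β.sort (· ≤ ·)).length = β.card := length_sort _
  have hinit :
      ∀ i < β.card, (β.sort (· ≤ ·) ++ [a]).getD i 0 = (β.sort (· ≤ ·)).getD i 0 :=
    fun i hi => List.getD_append _ _ _ _ (hlen ▸ hi)
  have hlast : (β.sort (· ≤ ·) ++ [a]).getD β.card 0 = a := by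
    rw [List.getD_append_right _ _ _ _ hlen.le, hlen, Nat.sub_self]
    rfl
  unfold IsStandard
  rw [hcard, sort_insert_of_forall_lt h]
  constructor
  · intro hs
    refine ⟨fun i hi => hinit i hi ▸ hs i (by omega), hlast ▸ hs β.card (by omega)⟩
  · rintro ⟨hs, ha⟩ i hi
    rcases Nat.lt_or_ge i β.card with hi | hi
    · exact hinit i hi ▸ hs i hi
    · obtain rfl : i = β.card := by omega
      rwa [hlast]

lemma IsStandard.two_mul_card_le {β : Finset ℕ} {n : ℕ} (hs : IsStandard β)
    (hle : ∀ b ∈ β, b ≤ n) : 2 * β.card ≤ n := by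
  rcases Nat.eq_zero_or_pos β.card with h0 | hpos
  · omega
  have hlen : (β.sort (· ≤ ·)).length = β.card := length_sort _
  have hlast_mem : (β.sort (· ≤ ·)).getD (β.card - 1) 0 ∈ β := by
    rw [List.getD_eq_getElem _ _ (by omega)]
    exact (mem_sort _).1 (List.getElem_mem _)
  have := hs (β.card - 1) (by omega)
  have := hle _ hlast_mem
  omega

lemma stdLe_succ_eq_self {n k : ℕ} (hn : n < 2 * (k + 1)) : stdLe n (k + 1) = stdLe n k := by
  ext β
  simp only [mem_stdLe, and_congr_right_iff]
  intro hsub hs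
  have := hs.two_mul_card_le fun b hb => (mem_Icc.1 (hsub hb)).2
  omega

lemma card_stdLe_succ_succ {n k : ℕ} (hnk : 2 * (k + 1) ≤ n + 1) :
    (stdLe (n + 1) (k + 1)).card = (stdLe n (k + 1)).card + (stdLe n k).card := by
  have hn : n + 1 ∉ Icc 1 n := by simp
  rw [stdLe, ← insert_Icc_right_eq_Icc_add_one (by omega), card_filter_powerset_insert hn]
  congr 2
  refine filter_congr fun β hβ => ?_
  have hlt : ∀ b ∈ β, b < n + 1 := fun b hb =>
    Nat.lt_succ_of_le (mem_Icc.1 (mem_powerset.1 hβ hb)).2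
  rw [isStandard_insert_of_forall_lt hlt, card_insert_of_notMem fun h => (hlt _ h).false]
  constructor
  · rintro ⟨⟨hs, -⟩, hc⟩
    exact ⟨hs, by omega⟩
  · rintro ⟨hs, hc⟩
    exact ⟨⟨hs, by omega⟩, by omega⟩

theorem card_stdLe : ∀ {n k : ℕ}, 2 * k ≤ n + 1 → (stdLe n k).card = n.choose k
  | n, 0, _ => by
    rw [Nat.choose_zero_right, card_eq_one]
    refine ⟨∅, eq_singleton_iff_unique_mem.2 ⟨?_, fun β hβ => ?_⟩⟩
    · simp [mem_stdLe, IsStandard]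
    · exact card_eq_zero.1 (Nat.le_zero.1 (mem_stdLe.1 hβ).2.2)
  | 0, k + 1, h => by omega
  | n + 1, k + 1, h => by
    rcases Nat.lt_or_ge (n + 1) (2 * (k + 1)) with hlt | hge
    · obtain rfl : n = 2 * k := by omega
      rw [stdLe_succ_eq_self hlt, card_stdLe (by omega), Nat.choose_symm_half]
    · rw [card_stdLe_succ_succ hge, card_stdLe (by omega), card_stdLe (by omega),
        Nat.choose_succ_succ', add_comm]
termination_by n k => n + k

theorem statement1 (n k : ℕ) (h : (n : ℤ) ≥ 2 * k - 1) :
    (stdLe n k).card = n.choose k :=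
  card_stdLe (by omega)
end

section
/- Let k ≥ 0 and n ≥ 3k − 1 be integers. Then the Smith group of the adjacency matrix of the Kneser graph satisfies S(A_{n,k,k,0}) ≅ ⊕_{j=0}^{k} (ℤ/C(n−k−j, k−j)ℤ)^{μ_j(n)}, where μ_j(n) = C(n,j) − C(n,j−1). In particular, the adjacency matrix of the Kneser graph has a diagonal form whose diagonal entries are C(n−k−j, k−j) with multiplicity μ_j(n) for 0 ≤ j ≤ k. -/
open scoped Classical

/-- `μ_s(n) = C(n,s) − C(n,s−1)`. -/
noncomputable def mu (n : ℕ) (s : ℤ) : ℤ := C n s - C n (s - 1)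

/-- The `k`-element subsets of `{1,…,n}`. -/
def ksubsets (n k : ℕ) : Finset (Finset ℕ) :=
  (Finset.Icc 1 n).powerset.filter fun A => A.card = k

/-- The subset intersection matrix `A_{n,kr,kc,ℓ}`; for `ℓ = 0` this is the adjacency
matrix of the Kneser graph. -/
noncomputable def interMat (n kr kc ℓ : ℕ) :
    Matrix ↥(ksubsets n kr) ↥(ksubsets n kc) ℤ :=
  Matrix.of fun A B => if ((A : Finset ℕ) ∩ (B : Finset ℕ)).card = ℓ then 1 else 0

/-- The Smith group of an integer matrix. -/
abbrev SmithGroup {ρ γ : Type*} (M : Matrix ρ γ ℤ) : Type _ :=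
  (γ → ℤ) ⧸ Submodule.span ℤ (Set.range fun r : ρ => M r)

/-!
Wilson's spanning argument. Call `S ⊆ {1,…,n}` a ballot set if every initial segment `{1,…,m}`
contains at most `m / 2` of its elements. For `s`-subsets of `{1,…,n}`, the containment vectors
`B ↦ [S ⊆ B]` of the ballot sets `S` with `|S| ≤ min(s, n - s)` span `ℤ^(n choose s)`: by induction
on `n`, splitting the `s`-sets according to whether they contain `n + 1`. Passing to complements,
the disjointness vectors `v_S = [S ∩ B = ∅]` of the ballot sets with `|S| ≤ k` span
`ℤ^(n choose k)`; there are `∑_{i ≤ k} μ_i(n) = C(n, k)` of them, so they form a basis. Summing the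
rows of the Kneser matrix over the `k`-sets containing a ballot `i`-set `S` gives
`C(n - k - i, k - i) v_S`, and these sums generate the row lattice, which is therefore diagonal in
the basis `(v_S)`.
-/

namespace Kneser

open Finset Matrix

lemma ksubsets_eq_powersetCard (n s : ℕ) : ksubsets n s = (Icc 1 n).powersetCard s := by
  rw [powersetCard_eq_filter]; rfl

lemma mem_ksubsets {n s : ℕ} {A : Finset ℕ} : A ∈ ksubsets n s ↔ A ⊆ Icc 1 n ∧ #A = s := by
  rw [ksubsets_eq_powersetCard, mem_powersetCard]

lemma card_ksubsets (n s : ℕ) : #(ksubsets n s) = n.choose s := by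
  rw [ksubsets_eq_powersetCard, card_powersetCard, Nat.card_Icc, Nat.add_sub_cancel]

lemma ksubsets_zero (n : ℕ) : ksubsets n 0 = {∅} := by
  rw [ksubsets_eq_powersetCard, powersetCard_zero]

lemma ksubsets_eq_empty {n s : ℕ} (h : n < s) : ksubsets n s = ∅ := by
  rw [ksubsets_eq_powersetCard, powersetCard_eq_empty, Nat.card_Icc]
  omega

lemma succ_notMem_of_subset_Icc {n : ℕ} {S : Finset ℕ} (hS : S ⊆ Icc 1 n) : n + 1 ∉ S :=
  fun h => by simpa using hS h

lemma mem_ksubsets_succ {n s : ℕ} {B : Finset ℕ} (hB : B ∈ ksubsets n s) :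
    B ∈ ksubsets (n + 1) s := by
  rw [mem_ksubsets] at hB ⊢
  exact ⟨hB.1.trans (Icc_subset_Icc_right n.le_succ), hB.2⟩

lemma mem_ksubsets_of_notMem {n s : ℕ} {B : Finset ℕ} (hB : B ∈ ksubsets (n + 1) s)
    (h : n + 1 ∉ B) : B ∈ ksubsets n s := by
  rw [mem_ksubsets] at hB ⊢
  refine ⟨fun x hx => ?_, hB.2⟩
  have := mem_Icc.mp (hB.1 hx)
  have : x ≠ n + 1 := by rintro rfl; exact h hx
  simp only [mem_Icc]; omega

lemma erase_mem_ksubsets {n s : ℕ} {B : Finset ℕ} (hB : B ∈ ksubsets (n + 1) (s + 1))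
    (h : n + 1 ∈ B) : B.erase (n + 1) ∈ ksubsets n s := by
  rw [mem_ksubsets] at hB
  refine mem_ksubsets_of_notMem (mem_ksubsets.mpr ⟨(erase_subset _ _).trans hB.1, ?_⟩)
    (notMem_erase _ _)
  rw [card_erase_of_mem h, hB.2, Nat.add_sub_cancel]

lemma insert_mem_ksubsets {n s : ℕ} {B : Finset ℕ} (hB : B ∈ ksubsets n s) :
    insert (n + 1) B ∈ ksubsets (n + 1) (s + 1) := by
  rw [mem_ksubsets] at hB ⊢
  refine ⟨insert_subset (by simp) (hB.1.trans (Icc_subset_Icc_right n.le_succ)), ?_⟩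
  rw [card_insert_of_notMem (succ_notMem_of_subset_Icc hB.1), hB.2]

lemma sdiff_mem_ksubsets {n s t : ℕ} {B : Finset ℕ} (hB : B ∈ ksubsets n s) (hst : s + t = n) :
    Icc 1 n \ B ∈ ksubsets n t := by
  rw [mem_ksubsets] at hB ⊢
  refine ⟨sdiff_subset, ?_⟩
  rw [card_sdiff_of_subset hB.1, Nat.card_Icc, hB.2]
  omega

lemma C_natCast (a b : ℕ) : C a b = a.choose b := by
  unfold C
  split_ifs with h
  · simp
  · rw [Nat.choose_eq_zero_of_lt (by omega)]; simp

lemma C_of_neg (x : ℤ) {y : ℤ} (h : y < 0) : C x y = 0 := by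
  unfold C
  rw [if_neg (by omega)]

lemma C_natCast_zero (n : ℕ) : C n 0 = 1 := by
  simpa using C_natCast n 0

lemma C_succ_left (n : ℕ) (s : ℤ) : C ((n + 1 : ℕ) : ℤ) s = C n s + C n (s - 1) := by
  rcases lt_or_ge s 0 with hs | hs
  · rw [C_of_neg _ hs, C_of_neg _ hs, C_of_neg _ (by omega), add_zero]
  lift s to ℕ using hs
  cases s with
  | zero =>
    rw [Nat.cast_zero, zero_sub, C_natCast_zero, C_natCast_zero, C_of_neg _ (by norm_num),
      add_zero]
  | succ s =>
    rw [show ((s + 1 : ℕ) : ℤ) - 1 = s by push_cast; ring, C_natCast, C_natCast, C_natCast,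
      Nat.choose_succ_succ']
    push_cast; ring

lemma mu_succ (n : ℕ) (s : ℤ) : mu (n + 1) s = mu n s + mu n (s - 1) := by
  simp only [mu]
  rw [C_succ_left, C_succ_left]
  ring

lemma mu_zero (n : ℕ) : mu n 0 = 1 := by
  simp [mu, C_natCast_zero, C_of_neg]

lemma mu_eq_zero {n i : ℕ} (h : 2 * i = n + 1) : mu n i = 0 := by
  obtain ⟨j, rfl⟩ : ∃ j, i = j + 1 := ⟨i - 1, by omega⟩
  rw [mu, show ((j + 1 : ℕ) : ℤ) - 1 = j by push_cast; ring, C_natCast, C_natCast,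
    ← Nat.choose_symm (by omega), show n - (j + 1) = j by omega, sub_self]

lemma sum_mu (n k : ℕ) : ∑ i ∈ range (k + 1), mu n i = n.choose k := by
  have := sum_range_sub (fun i : ℕ => C n ((i : ℤ) - 1)) (k + 1)
  simp only [Nat.cast_add, Nat.cast_one, add_sub_cancel_right, CharP.cast_eq_zero, zero_sub,
    C_of_neg _ (show (-1 : ℤ) < 0 by norm_num), sub_zero] at this
  rw [← C_natCast, ← this]
  rfl

def IsBallot (S : Finset ℕ) : Prop :=
  ∀ m, 2 * #{x ∈ S | x ≤ m} ≤ m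

noncomputable def ballotSets (n i : ℕ) : Finset (Finset ℕ) :=
  {S ∈ ksubsets n i | IsBallot S}

lemma mem_ballotSets {n i : ℕ} {S : Finset ℕ} :
    S ∈ ballotSets n i ↔ S ∈ ksubsets n i ∧ IsBallot S := by
  simp [ballotSets]

lemma IsBallot.mono {S T : Finset ℕ} (hS : IsBallot S) (hTS : T ⊆ S) : IsBallot T :=
  fun m => (Nat.mul_le_mul_left 2 (card_le_card (filter_subset_filter _ hTS))).trans (hS m)

lemma IsBallot.two_mul_card_le {n : ℕ} {S : Finset ℕ} (hS : IsBallot S) (hSn : S ⊆ Icc 1 n) :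
    2 * #S ≤ n := by
  have := hS n
  rwa [filter_true_of_mem fun x hx => (mem_Icc.mp (hSn hx)).2] at this

lemma IsBallot.insert {n : ℕ} {S : Finset ℕ} (hS : IsBallot S) (hSn : S ⊆ Icc 1 n)
    (h : 2 * (#S + 1) ≤ n + 1) : IsBallot (insert (n + 1) S) := by
  intro m
  rw [filter_insert]
  split_ifs with hm
  · rw [filter_true_of_mem fun x hx => (mem_Icc.mp (hSn hx)).2.trans (by omega),
      card_insert_of_notMem (succ_notMem_of_subset_Icc hSn)]
    omega
  · exact hS m

lemma ballotSets_zero (n : ℕ) : ballotSets n 0 = {∅} := by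
  ext S
  simp only [mem_ballotSets, ksubsets_zero, mem_singleton, and_iff_left_iff_imp]
  rintro rfl m
  simp

lemma ballotSets_eq_empty {n i : ℕ} (h : n < 2 * i) : ballotSets n i = ∅ := by
  ext S
  simp only [mem_ballotSets, mem_ksubsets, notMem_empty, iff_false]
  rintro ⟨⟨hSn, rfl⟩, hS⟩
  have := hS.two_mul_card_le hSn
  omega

lemma ballotSets_subset_succ (n i : ℕ) : ballotSets n i ⊆ ballotSets (n + 1) i :=
  fun _ hS => by
    rw [mem_ballotSets] at hS ⊢
    exact ⟨mem_ksubsets_succ hS.1, hS.2⟩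

lemma insert_mem_ballotSets {n i : ℕ} {S : Finset ℕ} (hS : S ∈ ballotSets n i)
    (h : 2 * (i + 1) ≤ n + 1) : insert (n + 1) S ∈ ballotSets (n + 1) (i + 1) := by
  obtain ⟨hSk, hS⟩ := mem_ballotSets.mp hS
  have hSn := (mem_ksubsets.mp hSk).1
  refine mem_ballotSets.mpr ⟨insert_mem_ksubsets hSk, hS.insert hSn ?_⟩
  rwa [(mem_ksubsets.mp hSk).2]

lemma ballotSets_succ {n i : ℕ} (h : 2 * (i + 1) ≤ n + 1) :
    ballotSets (n + 1) (i + 1) =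
      ballotSets n (i + 1) ∪ (ballotSets n i).image (insert (n + 1)) := by
  refine Subset.antisymm (fun S hS => ?_) (union_subset (ballotSets_subset_succ n _) ?_)
  · obtain ⟨hSk, hSb⟩ := mem_ballotSets.mp hS
    rw [mem_union, mem_image]
    by_cases hn : n + 1 ∈ S
    · refine Or.inr ⟨S.erase (n + 1), ?_, insert_erase hn⟩
      exact mem_ballotSets.mpr ⟨erase_mem_ksubsets hSk hn, hSb.mono (erase_subset _ _)⟩
    · exact Or.inl (mem_ballotSets.mpr ⟨mem_ksubsets_of_notMem hSk hn, hSb⟩)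
  · rintro _ hS
    obtain ⟨T, hT, rfl⟩ := mem_image.mp hS
    exact insert_mem_ballotSets hT h

lemma card_ballotSets {n i : ℕ} (h : 2 * i ≤ n + 1) : (#(ballotSets n i) : ℤ) = mu n i := by
  induction n generalizing i with
  | zero =>
    obtain rfl : i = 0 := by omega
    simp [ballotSets_zero, mu_zero]
  | succ n ih =>
    cases i with
    | zero => simp [ballotSets_zero, mu_zero]
    | succ i =>
      rcases (show 2 * (i + 1) ≤ n + 1 ∨ 2 * (i + 1) = n + 2 by omega) with h' | h'
      · have hdisj : Disjoint (ballotSets n (i + 1)) ((ballotSets n i).image (insert (n + 1))) :=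
          disjoint_right.mpr fun S hS hS' => by
            obtain ⟨T, -, rfl⟩ := mem_image.mp hS
            exact succ_notMem_of_subset_Icc
              (mem_ksubsets.mp (mem_ballotSets.mp hS').1).1 (mem_insert_self _ _)
        have hinj : Set.InjOn (insert (n + 1)) (ballotSets n i : Set (Finset ℕ)) :=
          fun T hT T' hT' hTT' => by
            have hn : ∀ {U}, U ∈ ballotSets n i → n + 1 ∉ U :=
              fun hU => succ_notMem_of_subset_Icc (mem_ksubsets.mp (mem_ballotSets.mp hU).1).1
            rw [← erase_insert (hn hT), ← erase_insert (hn hT')]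
            exact congrArg (·.erase (n + 1)) hTT'
        rw [ballotSets_succ h', card_union_of_disjoint hdisj, card_image_of_injOn hinj,
          Nat.cast_add, ih h', ih (by omega), mu_succ, Nat.cast_succ, add_sub_cancel_right]
      · rw [ballotSets_eq_empty (by omega), mu_eq_zero h', card_empty, Nat.cast_zero]

noncomputable def supVec (n s : ℕ) (S : Finset ℕ) : ksubsets n s → ℤ :=
  fun B => if S ⊆ (B : Finset ℕ) then 1 else 0

noncomputable def disjVec (n s : ℕ) (S : Finset ℕ) : ksubsets n s → ℤ :=
  fun B => if Disjoint S (B : Finset ℕ) then 1 else 0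

def ballotSupVecs (n s d : ℕ) : Set (ksubsets n s → ℤ) :=
  {f | ∃ i S, i ≤ d ∧ S ∈ ballotSets n i ∧ f = supVec n s S}

lemma supVec_eq_zero {n s : ℕ} {S : Finset ℕ} (h : s < #S) : supVec n s S = 0 := by
  funext B
  have : ¬ S ⊆ (B : Finset ℕ) := fun hSB => by
    have := card_le_card hSB
    rw [(mem_ksubsets.mp B.2).2] at this
    omega
  simp [supVec, this]

noncomputable def liftAvoid (n s : ℕ) : (ksubsets n s → ℤ) →ₗ[ℤ] (ksubsets (n + 1) s → ℤ) where
  toFun f B := if h : n + 1 ∈ (B : Finset ℕ) then 0 else f ⟨B, mem_ksubsets_of_notMem B.2 h⟩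
  map_add' f g := by ext B; by_cases h : n + 1 ∈ (B : Finset ℕ) <;> simp [h]
  map_smul' c f := by ext B; by_cases h : n + 1 ∈ (B : Finset ℕ) <;> simp [h]

noncomputable def liftInsert (n s : ℕ) :
    (ksubsets n s → ℤ) →ₗ[ℤ] (ksubsets (n + 1) (s + 1) → ℤ) where
  toFun f B := if h : n + 1 ∈ (B : Finset ℕ) then f ⟨_, erase_mem_ksubsets B.2 h⟩ else 0
  map_add' f g := by ext B; by_cases h : n + 1 ∈ (B : Finset ℕ) <;> simp [h]
  map_smul' c f := by ext B; by_cases h : n + 1 ∈ (B : Finset ℕ) <;> simp [h]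

lemma range_liftAvoid_sup_range_liftInsert (n s : ℕ) :
    LinearMap.range (liftAvoid n (s + 1)) ⊔ LinearMap.range (liftInsert n s) = ⊤ := by
  refine eq_top_iff.mpr fun x _ => Submodule.mem_sup.mpr
    ⟨_, ⟨fun B => x ⟨B, mem_ksubsets_succ B.2⟩, rfl⟩,
      _, ⟨fun B => x ⟨_, insert_mem_ksubsets B.2⟩, rfl⟩, ?_⟩
  ext B
  simp only [liftAvoid, liftInsert, LinearMap.coe_mk, AddHom.coe_mk, Pi.add_apply]
  split_ifs with h
  · exact (zero_add _).trans (congrArg x (Subtype.ext (insert_erase h)))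
  · exact add_zero _

lemma supVec_succ {n s : ℕ} {S : Finset ℕ} (hS : S ⊆ Icc 1 n) :
    supVec (n + 1) (s + 1) S =
      liftAvoid n (s + 1) (supVec n (s + 1) S) + liftInsert n s (supVec n s S) := by
  ext B
  simp only [supVec, liftAvoid, liftInsert, LinearMap.coe_mk, AddHom.coe_mk, Pi.add_apply]
  by_cases h : n + 1 ∈ (B : Finset ℕ)
  · simp [h, subset_erase, succ_notMem_of_subset_Icc hS]
  · simp [h]

lemma supVec_insert {n s : ℕ} {S : Finset ℕ} (hS : S ⊆ Icc 1 n) :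
    supVec (n + 1) (s + 1) (insert (n + 1) S) = liftInsert n s (supVec n s S) := by
  ext B
  simp only [supVec, liftInsert, LinearMap.coe_mk, AddHom.coe_mk]
  by_cases h : n + 1 ∈ (B : Finset ℕ)
  · simp [h, subset_erase, insert_subset_iff, succ_notMem_of_subset_Icc hS]
  · simp [h, insert_subset_iff]

lemma subsingleton_of_lt {n s : ℕ} (h : n < s) : Subsingleton (ksubsets n s → ℤ) :=
  have : IsEmpty (ksubsets n s) := isEmpty_coe_sort.mpr (ksubsets_eq_empty h)
  inferInstance

lemma span_ballotSupVecs_zero (n d : ℕ) : Submodule.span ℤ (ballotSupVecs n 0 d) = ⊤ := by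
  have hmem : (∅ : Finset ℕ) ∈ ksubsets n 0 := by simp [ksubsets_zero]
  refine eq_top_iff.mpr fun x _ => ?_
  have hx : x = x ⟨∅, hmem⟩ • supVec n 0 ∅ := by
    ext B
    obtain rfl : B = ⟨∅, hmem⟩ := Subtype.ext (by simpa [ksubsets_zero] using B.2)
    simp [supVec]
  rw [hx]
  exact Submodule.smul_mem _ _
    (Submodule.subset_span ⟨0, ∅, Nat.zero_le d, by simp [ballotSets_zero], rfl⟩)

lemma span_ballotSupVecs_succ {n s : ℕ} (hs : s ≤ n)
    (ih : ∀ t, Submodule.span ℤ (ballotSupVecs n t (min t (n - t))) = ⊤) :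
    Submodule.span ℤ (ballotSupVecs (n + 1) (s + 1) (min (s + 1) (n + 1 - (s + 1)))) = ⊤ := by
  set d := min (s + 1) (n + 1 - (s + 1))
  set V := Submodule.span ℤ (ballotSupVecs (n + 1) (s + 1) d)
  have hsub : ∀ {i S}, S ∈ ballotSets n i → S ⊆ Icc 1 n :=
    fun hS => (mem_ksubsets.mp (mem_ballotSets.mp hS).1).1
  have supVec_mem : ∀ {i S}, i ≤ d → S ∈ ballotSets n i → supVec (n + 1) (s + 1) S ∈ V :=
    fun hi hS => Submodule.subset_span ⟨_, _, hi, ballotSets_subset_succ _ _ hS, rfl⟩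
  have insert_mem : ∀ {i S}, i < d → S ∈ ballotSets n i → liftInsert n s (supVec n s S) ∈ V :=
    fun hi hS => by
      rw [← supVec_insert (hsub hS)]
      exact Submodule.subset_span ⟨_, _, hi, insert_mem_ballotSets hS (by omega), rfl⟩
  have avoid_le : LinearMap.range (liftAvoid n (s + 1)) ≤ V := by
    rcases hs.eq_or_lt with rfl | hs
    · have := subsingleton_of_lt (Nat.lt_succ_self s)
      rintro _ ⟨f, rfl⟩
      rw [Subsingleton.elim f 0, map_zero]
      exact V.zero_mem
    rw [LinearMap.range_eq_map, ← ih (s + 1), Submodule.map_span_le]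
    rintro _ ⟨i, S, hi, hS, rfl⟩
    rw [eq_sub_of_add_eq (supVec_succ (hsub hS)).symm]
    refine V.sub_mem (supVec_mem (by omega) hS) ?_
    rcases (show i < d ∨ i = s + 1 by omega) with hi | rfl
    · exact insert_mem hi hS
    · rw [supVec_eq_zero (by rw [(mem_ksubsets.mp (mem_ballotSets.mp hS).1).2]; omega),
        map_zero]
      exact V.zero_mem
  have insert_le : LinearMap.range (liftInsert n s) ≤ V := by
    rw [LinearMap.range_eq_map, ← ih s, Submodule.map_span_le]
    rintro _ ⟨i, S, hi, hS, rfl⟩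
    rcases (show i < d ∨ i = d by omega) with hi | rfl
    · exact insert_mem hi hS
    · rw [eq_sub_of_add_eq' (supVec_succ (hsub hS)).symm]
      exact V.sub_mem (supVec_mem le_rfl hS) (avoid_le ⟨_, rfl⟩)
  rw [eq_top_iff, ← range_liftAvoid_sup_range_liftInsert n s]
  exact sup_le avoid_le insert_le

theorem span_ballotSupVecs (n s : ℕ) :
    Submodule.span ℤ (ballotSupVecs n s (min s (n - s))) = ⊤ := by
  induction n generalizing s with
  | zero =>
    rcases s with _ | s
    · exact span_ballotSupVecs_zero _ _
    · have := subsingleton_of_lt s.succ_pos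
      exact Subsingleton.elim _ _
  | succ n ih =>
    rcases s with _ | s
    · exact span_ballotSupVecs_zero _ _
    rcases le_or_gt s n with hs | hs
    · exact span_ballotSupVecs_succ hs ih
    · have := subsingleton_of_lt (show n + 1 < s + 1 by omega)
      exact Subsingleton.elim _ _

def complEquiv (n k : ℕ) (hk : k ≤ n) : ksubsets n k ≃ ksubsets n (n - k) where
  toFun B := ⟨Icc 1 n \ B, sdiff_mem_ksubsets B.2 (by omega)⟩
  invFun D := ⟨Icc 1 n \ D, sdiff_mem_ksubsets D.2 (by omega)⟩
  left_inv B := Subtype.ext (_root_.sdiff_sdiff_eq_self (mem_ksubsets.mp B.2).1)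
  right_inv D := Subtype.ext (_root_.sdiff_sdiff_eq_self (mem_ksubsets.mp D.2).1)

lemma supVec_comp_complEquiv {n k : ℕ} (hk : k ≤ n) {S : Finset ℕ} (hS : S ⊆ Icc 1 n) :
    supVec n (n - k) S ∘ complEquiv n k hk = disjVec n k S := by
  ext B
  simp [supVec, disjVec, complEquiv, subset_sdiff, hS]

abbrev BallotIndex (n k : ℕ) : Type :=
  (i : Fin (k + 1)) × ballotSets n i

theorem span_disjVec {n k : ℕ} (hk : 2 * k ≤ n) :
    Submodule.span ℤ (Set.range fun σ : BallotIndex n k => disjVec n k σ.2) = ⊤ := by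
  let L := LinearEquiv.funCongrLeft ℤ ℤ (complEquiv n k (by omega))
  have hspan := span_ballotSupVecs n (n - k)
  rw [show min (n - k) (n - (n - k)) = k by omega] at hspan
  rw [eq_top_iff, ← LinearEquiv.range L, LinearMap.range_eq_map, ← hspan, Submodule.map_span_le]
  rintro _ ⟨i, S, hi, hS, rfl⟩
  refine Submodule.subset_span ⟨⟨⟨i, by omega⟩, ⟨S, hS⟩⟩, ?_⟩
  exact (supVec_comp_complEquiv _ (mem_ksubsets.mp (mem_ballotSets.mp hS).1).1).symm

lemma card_ballotIndex {n k : ℕ} (hk : 2 * k ≤ n + 1) :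
    Fintype.card (BallotIndex n k) = Module.finrank ℤ (ksubsets n k → ℤ) := by
  rw [Module.finrank_fintype_fun_eq_card, Fintype.card_coe, card_ksubsets, Fintype.card_sigma]
  zify
  simp only [Fintype.card_coe]
  rw [Fin.sum_univ_eq_sum_range (fun i => (#(ballotSets n i) : ℤ)), ← sum_mu]
  exact sum_congr rfl fun i hi => card_ballotSets (by simp at hi; omega)

noncomputable def disjBasis (n k : ℕ) (hk : 2 * k ≤ n) :
    Module.Basis (BallotIndex n k) ℤ (ksubsets n k → ℤ) :=
  basisOfTopLeSpanOfCardEqFinrank _ (span_disjVec hk).ge (card_ballotIndex (by omega))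

lemma coe_disjBasis {n k : ℕ} (hk : 2 * k ≤ n) :
    ⇑(disjBasis n k hk) = fun σ => disjVec n k σ.2 :=
  coe_basisOfTopLeSpanOfCardEqFinrank _ _ _

lemma supVec_vecMul_interMat {n k i : ℕ} {S : Finset ℕ} (hS : S ∈ ksubsets n i) (hik : i ≤ k) :
    supVec n k S ᵥ* interMat n k k 0 = ((n - k - i).choose (k - i) : ℤ) • disjVec n k S := by
  ext B'
  obtain ⟨hSn, hSi⟩ := mem_ksubsets.mp hS
  obtain ⟨hB'n, hB'k⟩ := mem_ksubsets.mp B'.2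
  have hcount : (supVec n k S ᵥ* interMat n k k 0) B' =
      #{B ∈ ksubsets n k | S ⊆ B ∧ Disjoint B B'} := by
    rw [card_filter, Nat.cast_sum, ← sum_coe_sort (ksubsets n k)]
    unfold vecMul dotProduct
    refine Finset.sum_congr rfl fun B _ => ?_
    by_cases hSB : S ⊆ B <;> simp [supVec, interMat, disjoint_iff_inter_eq_empty, hSB]
  rw [hcount]
  by_cases hSB' : Disjoint S B'
  · have hfilter : {B ∈ ksubsets n k | S ⊆ B ∧ Disjoint B B'} =
        {B ∈ (Icc 1 n \ B').powersetCard k | S ⊆ B} := by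
      ext B
      simp only [mem_filter, mem_ksubsets, mem_powersetCard, subset_sdiff]
      tauto
    rw [hfilter, card_filter_powersetCard_subset _ _ _ (subset_sdiff.mpr ⟨hSn, hSB'⟩) (by omega),
      card_sdiff_of_subset hB'n, Nat.card_Icc, hB'k, hSi]
    simp [disjVec, hSB']
  · have hfilter : {B ∈ ksubsets n k | S ⊆ B ∧ Disjoint B B'} = ∅ :=
      filter_false_of_mem fun B _ hB => hSB' (hB.2.mono_left hB.1)
    simp [hfilter, disjVec, hSB']

theorem span_row_interMat {n k : ℕ} (hk : 2 * k ≤ n) :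
    Submodule.span ℤ (Set.range (interMat n k k 0).row) = Submodule.span ℤ
      (Set.range fun σ : BallotIndex n k =>
        ((n - k - σ.1).choose (k - σ.1) : ℤ) • disjBasis n k hk σ) := by
  have hspan := span_ballotSupVecs n k
  rw [show min k (n - k) = k by omega] at hspan
  rw [← range_vecMulLinear, LinearMap.range_eq_map, ← hspan, coe_disjBasis]
  apply le_antisymm
  · rw [Submodule.map_span_le]
    rintro _ ⟨i, S, hi, hS, rfl⟩
    rw [vecMulLinear_apply, supVec_vecMul_interMat (mem_ballotSets.mp hS).1 hi]
    exact Submodule.subset_span ⟨⟨⟨i, by omega⟩, ⟨S, hS⟩⟩, rfl⟩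
  · rw [Submodule.span_le]
    rintro _ ⟨⟨i, S, hS⟩, rfl⟩
    dsimp only
    rw [← supVec_vecMul_interMat (mem_ballotSets.mp hS).1 i.is_le]
    exact Submodule.mem_map_of_mem (Submodule.subset_span ⟨i, S, i.is_le, hS, rfl⟩)

end Kneser

section QuotientByDiagonal

open Submodule

variable {ι R M : Type*} [Fintype ι] [DecidableEq ι] [CommRing R] [AddCommGroup M] [Module R M]

lemma Submodule.span_range_single (c : ι → R) :
    span R (Set.range fun i => Pi.single i (c i)) = pi Set.univ fun i => Ideal.span {c i} := by
  rw [← iSup_map_single, ← Set.iUnion_singleton_eq_range, span_iUnion]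
  simp [Ideal.span, map_span]

lemma Module.Basis.map_equivFun_span_smul (b : Basis ι R M) (c : ι → R) :
    (span R (Set.range fun i => c i • b i)).map (b.equivFun : M →ₗ[R] ι → R) =
      pi Set.univ fun i => Ideal.span {c i} := by
  rw [map_span, ← Set.range_comp, ← span_range_single]
  congr with i j
  simp [Pi.single_apply, Finsupp.single_apply, eq_comm]

noncomputable def Module.Basis.quotientSpanSmulEquiv (b : Basis ι R M) (c : ι → R) :
    (M ⧸ span R (Set.range fun i => c i • b i)) ≃ₗ[R] Π i, R ⧸ Ideal.span {c i} :=
  (Submodule.Quotient.equiv _ _ b.equivFun (b.map_equivFun_span_smul c)).trans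
    (Submodule.quotientPi _)

end QuotientByDiagonal

/-- `S(A_{n,k,k,0}) ≅ ⊕_{j=0}^{k} (ℤ/C(n−k−j,k−j)ℤ)^{μ_j(n)}`. -/
theorem statement14 (n k : ℕ) (hn : 3 * k ≤ n + 1) :
    Nonempty (SmithGroup (interMat n k k 0) ≃+
      ((j : Fin (k + 1)) → Fin (mu n j).toNat → ZMod ((n - k - j).choose (k - j)))) := by
  have hk : 2 * k ≤ n := by omega
  have ballotSetsEquivFin (j : Fin (k + 1)) : Kneser.ballotSets n j ≃ Fin (mu n j).toNat :=
    Fintype.equivFinOfCardEq <| by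
      rw [Fintype.card_coe, ← Kneser.card_ballotSets (by omega), Int.toNat_natCast]
  exact ⟨((Submodule.quotEquivOfEq _ _ (Kneser.span_row_interMat hk)).trans
      ((Kneser.disjBasis n k hk).quotientSpanSmulEquiv _)).toAddEquiv
    |>.trans (AddEquiv.piCongrRight fun _ => (Int.quotientSpanNatEquivZMod _).toAddEquiv)
    |>.trans (LinearEquiv.piCurry ℤ fun (j : Fin (k + 1)) (_ : Kneser.ballotSets n j) =>
        ZMod ((n - k - j).choose (k - j))).toAddEquiv
    |>.trans (AddEquiv.piCongrRight fun j =>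
        AddEquiv.arrowCongr (ballotSetsEquivFin j) (AddEquiv.refl _))⟩
end
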